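/- For every odd integer t ≥ 3, there exists a 3-SCHGDD of type (6, 2^t). -/

import Mathlib

/-!
Index the six groups by `ℤ/5 ∪ {∞}` (`a ↦ a.castSucc`, `∞ = Fin.last 5`). For `a ∈ ℤ/5` and
`1 ≤ w ≤ t - 1` take the base blocks `{(∞, 0), (a, -w), (a + 1, w)}` and
`{(a, 0), (a + 1, -(t + 2w)), (a + 3, -(t + 4w))}`. Up to swapping the two groups, which negates
the differences, a pair of groups is `{a, ∞}`, `{a, a + 1}` or `{a, a + 2}`, and its differences are
`-w, w`, resp. `-2w, t + 2w`, resp. `2w, -(t + 4w)`. Each is an affine function of `w` whose slope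
is prime to the odd number `t`, so it is injective on `[1, t - 1]` and misses `S = tℤ/2tℤ`; the two
functions of a pair have disjoint images (by parity in the last two cases), so the `2(t - 1)`
differences exhaust the `2t - 2` elements outside `S`.
-/

def IsSCHGDD (k n m t : ℕ) (B : Finset (Finset (Fin n × ZMod (m * t)))) : Prop :=
  (∀ b ∈ B, b.card = k) ∧
  (∀ b ∈ B, ∀ p ∈ b, ∀ q ∈ b, p.1 = q.1 → p = q) ∧
  (∀ i j : Fin n, i ≠ j → ∀ z : ZMod (m * t),
    (z ∈ AddSubgroup.zmultiples ((t : ZMod (m * t))) →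
      (∑ b ∈ B, ((b ×ˢ b).filter
        (fun pq => pq.1.1 = i ∧ pq.2.1 = j ∧ pq.1.2 - pq.2.2 = z)).card) = 0) ∧
    (z ∉ AddSubgroup.zmultiples ((t : ZMod (m * t))) →
      (∑ b ∈ B, ((b ×ˢ b).filter
        (fun pq => pq.1.1 = i ∧ pq.2.1 = j ∧ pq.1.2 - pq.2.2 = z)).card) = 1))

def ExistsSCHGDD (k n m t : ℕ) : Prop :=
  ∃ B : Finset (Finset (Fin n × ZMod (m * t))), IsSCHGDD k n m t B

open Finset AddSubgroup

section Counting

variable {α β : Type*} [DecidableEq β] {s : Finset α} {f g : α → β}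

theorem card_filter_eq_ite_of_injOn (hf : Set.InjOn f s) (z : β) :
    #{a ∈ s | f a = z} = if z ∈ s.image f then 1 else 0 := by
  split_ifs with hz
  · obtain ⟨a, ha, rfl⟩ := mem_image.1 hz
    refine card_eq_one.2 ⟨a, ext fun b => ?_⟩
    simp only [mem_filter, mem_singleton]
    exact ⟨fun ⟨hb, h⟩ => hf hb ha h, by rintro rfl; exact ⟨ha, rfl⟩⟩
  · exact card_eq_zero.2 (filter_eq_empty_iff.2 fun a ha h => hz (mem_image.2 ⟨a, ha, h⟩))

theorem card_filter_add_card_filter_eq_ite [Fintype β] {p : β → Prop} [DecidablePred p]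
    (hf : Set.InjOn f s) (hg : Set.InjOn g s) (hfp : ∀ a ∈ s, ¬ p (f a))
    (hgp : ∀ a ∈ s, ¬ p (g a)) (hfg : ∀ a ∈ s, ∀ b ∈ s, f a ≠ g b)
    (hcard : #{b | ¬ p b} ≤ 2 * #s) (z : β) :
    #{a ∈ s | f a = z} + #{a ∈ s | g a = z} = if p z then 0 else 1 := by
  have hdisj : Disjoint (s.image f) (s.image g) := by
    simp only [disjoint_left, mem_image]
    rintro _ ⟨a, ha, rfl⟩ ⟨b, hb, hab⟩
    exact hfg a ha b hb hab.symm
  have hcover : s.image f ∪ s.image g = ({b | ¬ p b} : Finset β) := by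
    refine eq_of_subset_of_card_le (fun b hb => ?_) ?_
    · rw [mem_filter_univ]
      rcases mem_union.1 hb with hb | hb <;> obtain ⟨a, ha, rfl⟩ := mem_image.1 hb
      exacts [hfp a ha, hgp a ha]
    · rw [card_union_of_disjoint hdisj, card_image_of_injOn hf, card_image_of_injOn hg]
      omega
  have hz : z ∈ s.image f ∨ z ∈ s.image g ↔ ¬ p z := by
    rw [← mem_union, hcover, mem_filter_univ]
  have := @disjoint_left.1 hdisj z
  rw [card_filter_eq_ite_of_injOn hf, card_filter_eq_ite_of_injOn hg]
  split_ifs <;> tauto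

end Counting

section DiffCount

variable {ι G : Type*} [DecidableEq ι] [AddGroup G] [DecidableEq G]

def diffCount (B : Finset (Finset (ι × G))) (i j : ι) (z : G) : ℕ :=
  ∑ b ∈ B, #{pq ∈ b ×ˢ b | pq.1.1 = i ∧ pq.2.1 = j ∧ pq.1.2 - pq.2.2 = z}

theorem diffCount_swap (B : Finset (Finset (ι × G))) (i j : ι) (z : G) :
    diffCount B j i (-z) = diffCount B i j z := by
  refine sum_congr rfl fun b _ =>
    card_nbij' Prod.swap Prod.swap ?_ ?_ (fun _ _ => rfl) (fun _ _ => rfl) <;>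
  · rintro ⟨p, q⟩ h
    simp only [coe_filter, mem_product, Set.mem_ofPred_eq, Prod.fst_swap, Prod.snd_swap] at h ⊢
    refine ⟨h.1.symm, h.2.2.1, h.2.1, ?_⟩
    simpa only [← neg_sub p.2 q.2, neg_eq_iff_eq_neg, neg_neg] using h.2.2.2

theorem diffCount_image {δ κ : Type*} [Fintype κ] {D : Finset δ} {p : δ → κ → ι × G}
    (hp : ∀ d, Function.Injective (p d)) (hD : Set.InjOn (fun d => univ.image (p d)) D)
    (i j : ι) (z : G) :
    diffCount (D.image fun d => univ.image (p d)) i j z =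
      ∑ d ∈ D, #{uv : κ × κ | (p d uv.1).1 = i ∧ (p d uv.2).1 = j ∧
        (p d uv.1).2 - (p d uv.2).2 = z} := by
  rw [diffCount, sum_image hD]
  refine sum_congr rfl fun d _ => ?_
  rw [← prodMap_image_product, filter_image, card_image_of_injective _ ((hp d).prodMap (hp d)),
    univ_product_univ]
  rfl

end DiffCount

theorem IsSCHGDD.of_diffCount {k n m t : ℕ} {B : Finset (Finset (Fin n × ZMod (m * t)))}
    (hcard : ∀ b ∈ B, #b = k) (hgrp : ∀ b ∈ B, ∀ p ∈ b, ∀ q ∈ b, p.1 = q.1 → p = q)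
    (hdiff : ∀ i j, i ≠ j → ∀ z,
      diffCount B i j z = if z ∈ zmultiples (t : ZMod (m * t)) then 0 else 1) :
    IsSCHGDD k n m t B :=
  ⟨hcard, hgrp, fun i j hij z =>
    ⟨fun hz => (hdiff i j hij z).trans (if_pos hz), fun hz => (hdiff i j hij z).trans (if_neg hz)⟩⟩

section Affine

variable {m t : ℕ}

theorem intCast_mem_zmultiples_natCast_iff (x : ℤ) :
    (x : ZMod (m * t)) ∈ zmultiples (t : ZMod (m * t)) ↔ (t : ℤ) ∣ x := by
  rw [mem_zmultiples_iff]
  constructor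
  · rintro ⟨k, hk⟩
    rw [zsmul_eq_mul, ← Int.cast_natCast (R := ZMod (m * t)), ← Int.cast_mul,
      ZMod.intCast_eq_intCast_iff_dvd_sub] at hk
    have hdvd := (Int.natCast_dvd_natCast.2 (Dvd.intro_left m rfl)).trans hk
    exact (dvd_sub_left (dvd_mul_left _ _)).1 hdvd
  · rintro ⟨k, rfl⟩
    exact ⟨k, by push_cast; ring⟩

theorem card_zmultiples_natCast [NeZero m] [NeZero t] :
    Nat.card (zmultiples (t : ZMod (m * t))) = m := by
  rw [Nat.card_zmultiples, ZMod.addOrderOf_coe _ (NeZero.ne _), Nat.gcd_mul_left_left,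
    Nat.mul_div_cancel _ (Nat.pos_of_neZero t)]

theorem eq_zero_of_dvd_mul_of_abs_lt {d x : ℤ} (hd : IsCoprime d t) (h : (t : ℤ) ∣ d * x)
    (hx : |x| < t) : x = 0 :=
  Int.eq_zero_of_abs_lt_dvd (hd.symm.dvd_of_dvd_mul_left h) hx

theorem injOn_affine {c d : ℤ} (hd : IsCoprime d t) :
    Set.InjOn (fun w : ℤ => ((c + d * w : ℤ) : ZMod (m * t))) (Icc 1 ((t : ℤ) - 1) : Set ℤ) := by
  intro w hw w' hw' h
  simp only [coe_Icc, Set.mem_Icc] at hw hw'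
  rw [ZMod.intCast_eq_intCast_iff_dvd_sub] at h
  have hdvd : (t : ℤ) ∣ d * (w' - w) :=
    (Int.natCast_dvd_natCast.2 (Dvd.intro_left m rfl)).trans (by simpa [mul_sub] using h)
  have := eq_zero_of_dvd_mul_of_abs_lt hd hdvd (abs_sub_lt_iff.2 ⟨by omega, by omega⟩)
  omega

theorem affine_notMem_zmultiples {c d w : ℤ} (hc : (t : ℤ) ∣ c) (hd : IsCoprime d t)
    (hw : w ∈ Icc 1 ((t : ℤ) - 1)) :
    ((c + d * w : ℤ) : ZMod (m * t)) ∉ zmultiples (t : ZMod (m * t)) := by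
  rw [intCast_mem_zmultiples_natCast_iff, dvd_add_right hc]
  intro h
  rw [mem_Icc] at hw
  have := eq_zero_of_dvd_mul_of_abs_lt hd h (abs_lt.2 ⟨by omega, by omega⟩)
  omega

theorem not_two_mul_dvd_of_odd {x : ℤ} (hx : Odd x) : ¬ (2 * t : ℤ) ∣ x := fun h =>
  Int.not_even_iff_odd.2 hx (even_iff_two_dvd.2 ((dvd_mul_right 2 _).trans h))

theorem card_filter_notMem_zmultiples [NeZero t] :
    #{z : ZMod (2 * t) | z ∉ zmultiples (t : ZMod (2 * t))} = 2 * t - 2 := by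
  rw [filter_not, card_univ_sdiff, ZMod.card, ← Fintype.card_subtype, ← Nat.card_eq_fintype_card,
    card_zmultiples_natCast]

theorem card_filter_affine_add_card_filter_affine_eq_ite [NeZero t] {f₁ f₂ : ℤ → ℤ}
    {c₁ d₁ c₂ d₂ : ℤ} (hf₁ : ∀ w, f₁ w = c₁ + d₁ * w) (hf₂ : ∀ w, f₂ w = c₂ + d₂ * w)
    (hc₁ : (t : ℤ) ∣ c₁) (hc₂ : (t : ℤ) ∣ c₂) (hd₁ : IsCoprime d₁ t) (hd₂ : IsCoprime d₂ t)
    (hdisj : ∀ w ∈ Icc 1 ((t : ℤ) - 1), ∀ w' ∈ Icc 1 ((t : ℤ) - 1), ¬ (2 * t : ℤ) ∣ f₂ w' - f₁ w)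
    (z : ZMod (2 * t)) :
    #{w ∈ Icc 1 ((t : ℤ) - 1) | (f₁ w : ZMod (2 * t)) = z} +
      #{w ∈ Icc 1 ((t : ℤ) - 1) | (f₂ w : ZMod (2 * t)) = z} =
      if z ∈ zmultiples (t : ZMod (2 * t)) then 0 else 1 := by
  simp only [hf₁, hf₂] at hdisj ⊢
  refine card_filter_add_card_filter_eq_ite (injOn_affine hd₁) (injOn_affine hd₂)
    (fun w hw => affine_notMem_zmultiples hc₁ hd₁ hw)
    (fun w hw => affine_notMem_zmultiples hc₂ hd₂ hw) (fun w hw w' hw' h => hdisj w hw w' hw' ?_)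
    ?_ z
  · rw [ZMod.intCast_eq_intCast_iff_dvd_sub] at h
    exact_mod_cast h
  · rw [card_filter_notMem_zmultiples, Int.card_Icc]
    omega

end Affine

namespace SCHGDD

def grp : Bool × Fin 5 → Fin 3 → Fin 6
  | (false, a) => ![Fin.last 5, a.castSucc, (a + 1).castSucc]
  | (true, a) => ![a.castSucc, (a + 1).castSucc, (a + 3).castSucc]

def lift (t w : ℤ) : Bool → Fin 3 → ℤ
  | false => ![0, -w, w]
  | true => ![0, -(t + 2 * w), -(t + 4 * w)]

def point (t : ℕ) (d : (Bool × Fin 5) × ℤ) (u : Fin 3) : Fin 6 × ZMod (2 * t) :=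
  (grp d.1 u, (lift t d.2 d.1.1 u : ZMod (2 * t)))

noncomputable def baseBlocks (t : ℕ) : Finset (Finset (Fin 6 × ZMod (2 * t))) :=
  (univ ×ˢ Icc 1 ((t : ℤ) - 1)).image fun d => univ.image (point t d)

variable {t : ℕ}

theorem grp_injective (s : Bool × Fin 5) : Function.Injective (grp s) := by
  revert s; decide

theorem image_grp_injective : Function.Injective fun s => univ.image (grp s) := by
  decide

theorem point_injective (t : ℕ) (d : (Bool × Fin 5) × ℤ) : Function.Injective (point t d) :=
  fun _ _ h => grp_injective d.1 (congrArg Prod.fst h)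

theorem injOn_block (ht : Odd t) :
    Set.InjOn (fun d => univ.image (point t d))
      ((univ ×ˢ Icc 1 ((t : ℤ) - 1) : Finset ((Bool × Fin 5) × ℤ)) : Set _) := by
  rintro ⟨s, w⟩ hw ⟨s', w'⟩ hw' h
  simp only [coe_product, coe_univ, Set.mem_prod, Set.mem_univ, true_and, mem_coe] at hw hw' h
  obtain rfl : s = s' := image_grp_injective <| by
    have := congrArg (image Prod.fst) h
    simp only [image_image] at this
    exact this
  obtain ⟨u, -, hu⟩ := mem_image.1 (h ▸ mem_image_of_mem (point t (s, w)) (mem_univ 1))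
  obtain rfl : u = 1 := grp_injective s (congrArg Prod.fst hu)
  obtain ⟨o, a⟩ := s
  have hval := (congrArg Prod.snd hu).symm
  congr 1
  cases o
  · exact injOn_affine (c := 0) (d := -1) (m := 2) isCoprime_one_left.neg_left hw hw'
      (by simpa [point, lift] using hval)
  · exact injOn_affine (c := -t) (d := -2) (m := 2)
      (Int.isCoprime_two_left.2 (by exact_mod_cast ht)).neg_left hw hw'
      (by simpa [point, lift, neg_add] using hval)

theorem card_of_mem_baseBlocks {b : Finset (Fin 6 × ZMod (2 * t))} (hb : b ∈ baseBlocks t) :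
    #b = 3 := by
  obtain ⟨d, -, rfl⟩ := mem_image.1 hb
  rw [card_image_of_injective _ (point_injective t d), card_univ, Fintype.card_fin]

theorem eq_of_fst_eq_of_mem_baseBlocks {b : Finset (Fin 6 × ZMod (2 * t))}
    (hb : b ∈ baseBlocks t) {p q : Fin 6 × ZMod (2 * t)} (hp : p ∈ b) (hq : q ∈ b)
    (h : p.1 = q.1) : p = q := by
  obtain ⟨d, -, rfl⟩ := mem_image.1 hb
  obtain ⟨u, -, rfl⟩ := mem_image.1 hp
  obtain ⟨v, -, rfl⟩ := mem_image.1 hq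
  rw [grp_injective d.1 h]

theorem diffCount_baseBlocks (ht : Odd t) (i j : Fin 6) (z : ZMod (2 * t)) :
    diffCount (baseBlocks t) i j z =
      ∑ x : (Bool × Fin 5) × Fin 3 × Fin 3 with grp x.1 x.2.1 = i ∧ grp x.1 x.2.2 = j,
        #{w ∈ Icc 1 ((t : ℤ) - 1) |
          ((lift t w x.1.1 x.2.1 - lift t w x.1.1 x.2.2 : ℤ) : ZMod (2 * t)) = z} := by
  rw [baseBlocks, diffCount_image (point_injective t) (injOn_block ht), sum_filter,
    Fintype.sum_prod_type, sum_product]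
  refine sum_congr rfl fun s _ => ?_
  simp only [card_filter]
  rw [sum_comm]
  refine sum_congr rfl fun uv _ => ?_
  split_ifs with h
  · refine sum_congr rfl fun w _ => ?_
    simp [point, h]
  · refine sum_eq_zero fun w _ => ?_
    simp [point, ← and_assoc, h]

theorem filter_grp_castSucc_last (a : Fin 5) :
    ({x : (Bool × Fin 5) × Fin 3 × Fin 3 |
      grp x.1 x.2.1 = a.castSucc ∧ grp x.1 x.2.2 = Fin.last 5} : Finset _) =
      {((false, a), 1, 0), ((false, a - 1), 2, 0)} := by
  revert a; decide

theorem filter_grp_castSucc_succ (a : Fin 5) :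
    ({x : (Bool × Fin 5) × Fin 3 × Fin 3 |
      grp x.1 x.2.1 = a.castSucc ∧ grp x.1 x.2.2 = (a + 1).castSucc} : Finset _) =
      {((false, a), 1, 2), ((true, a), 0, 1)} := by
  revert a; decide

theorem filter_grp_castSucc_add_two (a : Fin 5) :
    ({x : (Bool × Fin 5) × Fin 3 × Fin 3 |
      grp x.1 x.2.1 = a.castSucc ∧ grp x.1 x.2.2 = (a + 2).castSucc} : Finset _) =
      {((true, a - 1), 1, 2), ((true, a + 2), 2, 0)} := by
  revert a; decide

theorem exists_castSucc_of_ne {i j : Fin 6} (h : i ≠ j) :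
    ∃ a : Fin 5, ∃ k ∈ ({Fin.last 5, (a + 1).castSucc, (a + 2).castSucc} : Finset (Fin 6)),
      i = a.castSucc ∧ j = k ∨ j = a.castSucc ∧ i = k := by
  revert i j; decide

theorem diffCount_castSucc_last (ht : Odd t) (a : Fin 5) (z : ZMod (2 * t)) :
    diffCount (baseBlocks t) a.castSucc (Fin.last 5) z =
      if z ∈ zmultiples (t : ZMod (2 * t)) then 0 else 1 := by
  have : NeZero t := ⟨ht.pos.ne'⟩
  rw [diffCount_baseBlocks ht, filter_grp_castSucc_last, sum_pair (by simp)]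
  refine card_filter_affine_add_card_filter_affine_eq_ite (c₁ := 0) (d₁ := -1) (c₂ := 0)
    (d₂ := 1) (fun w => by simp [lift]) (fun w => by simp [lift]) (dvd_zero _) (dvd_zero _)
    isCoprime_one_left.neg_left isCoprime_one_left (fun w hw w' hw' h => ?_) z
  rw [mem_Icc] at hw hw'
  have hsum : (2 * t : ℤ) ∣ w' + w := by simpa [lift] using h
  have := Int.le_of_dvd (by omega) hsum
  omega

theorem diffCount_castSucc_succ (ht : Odd t) (a : Fin 5) (z : ZMod (2 * t)) :
    diffCount (baseBlocks t) a.castSucc (a + 1).castSucc z =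
      if z ∈ zmultiples (t : ZMod (2 * t)) then 0 else 1 := by
  have : NeZero t := ⟨ht.pos.ne'⟩
  have ht' : Odd (t : ℤ) := by exact_mod_cast ht
  rw [diffCount_baseBlocks ht, filter_grp_castSucc_succ, sum_pair (by simp)]
  refine card_filter_affine_add_card_filter_affine_eq_ite (c₁ := 0) (d₁ := -2) (c₂ := t)
    (d₂ := 2) (fun w => by simp [lift]; ring) (fun w => by simp [lift]) (dvd_zero _) dvd_rfl
    (Int.isCoprime_two_left.2 ht').neg_left (Int.isCoprime_two_left.2 ht')
    (fun w _ w' _ => not_two_mul_dvd_of_odd ?_) z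
  obtain ⟨k, hk⟩ := ht'
  exact ⟨k + w' + w, by simp [lift, hk]; ring⟩

theorem diffCount_castSucc_add_two (ht : Odd t) (a : Fin 5) (z : ZMod (2 * t)) :
    diffCount (baseBlocks t) a.castSucc (a + 2).castSucc z =
      if z ∈ zmultiples (t : ZMod (2 * t)) then 0 else 1 := by
  have : NeZero t := ⟨ht.pos.ne'⟩
  have ht' : Odd (t : ℤ) := by exact_mod_cast ht
  rw [diffCount_baseBlocks ht, filter_grp_castSucc_add_two, sum_pair (by simp)]
  refine card_filter_affine_add_card_filter_affine_eq_ite (c₁ := 0) (d₁ := 2) (c₂ := -t)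
    (d₂ := -4) (fun w => by simp [lift]; ring) (fun w => by simp [lift]; ring) (dvd_zero _)
    (dvd_neg.2 dvd_rfl) (Int.isCoprime_two_left.2 ht') ?_
    (fun w _ w' _ => not_two_mul_dvd_of_odd ?_) z
  · simpa using ((Int.isCoprime_two_left.2 ht').pow_left (m := 2)).neg_left
  obtain ⟨k, hk⟩ := ht'
  exact ⟨-k - 2 * w' - w - 1, by simp [lift, hk]; ring⟩

theorem diffCount_baseBlocks_eq_ite (ht : Odd t) {i j : Fin 6} (hij : i ≠ j)
    (z : ZMod (2 * t)) :
    diffCount (baseBlocks t) i j z = if z ∈ zmultiples (t : ZMod (2 * t)) then 0 else 1 := by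
  have key : ∀ a : Fin 5,
      ∀ k ∈ ({Fin.last 5, (a + 1).castSucc, (a + 2).castSucc} : Finset (Fin 6)), ∀ z,
        diffCount (baseBlocks t) a.castSucc k z =
          if z ∈ zmultiples (t : ZMod (2 * t)) then 0 else 1 := by
    simp only [mem_insert, mem_singleton]
    rintro a k (rfl | rfl | rfl)
    exacts [diffCount_castSucc_last ht a, diffCount_castSucc_succ ht a,
      diffCount_castSucc_add_two ht a]
  obtain ⟨a, k, hk, ⟨rfl, rfl⟩ | ⟨rfl, rfl⟩⟩ := exists_castSucc_of_ne hij
  · exact key a _ hk z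
  · rw [← diffCount_swap, key a _ hk]
    simp only [neg_mem_iff]

end SCHGDD

theorem schgdd_6_2t_exists_general (t : ℕ) (htodd : Odd t) :
    ExistsSCHGDD 3 6 2 t :=
  ⟨SCHGDD.baseBlocks t, .of_diffCount (fun _ => SCHGDD.card_of_mem_baseBlocks)
    (fun _ hb _ hp _ hq => SCHGDD.eq_of_fst_eq_of_mem_baseBlocks hb hp hq)
    (fun _ _ hij => SCHGDD.diffCount_baseBlocks_eq_ite htodd hij)⟩

/-- Lemma 6.10: for every odd integer `t ≥ 3` there exists a `3`-SCHGDD of type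
`(6, 2^t)`. -/
theorem schgdd_6_2t_exists (t : ℕ) (htodd : Odd t) (ht : 3 ≤ t) :
    ExistsSCHGDD 3 6 2 t :=
  schgdd_6_2t_exists_general t htodd
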